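/- (Theorem 1(e)) For x = 1101 as well as for x = 1110, the number of triples (S_1,S_2,S_3) of pairwise disjoint subsets of {1,…,n} that are words of type x equals ρ_2^{−2}; moreover every such word has aliasing index |V(x)| = ρ_2 and length m + X = l_4 + 3. -/

import Mathlib

open Real Finset

noncomputable section

/-- The trigonometric argument π/4 + (π/2)·t. -/
def trigArg (t : ℝ) : ℝ := Real.pi / 4 + Real.pi / 2 * t

/-- The dot product a'w = Σ_j a_j w_j as a real number. -/
def dotR {n : ℕ} (a w : Fin n → Fin 4) : ℝ :=
  ∑ j, ((a j : ℕ) : ℝ) * ((w j : ℕ) : ℝ)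

/-- ψ(a), depending on the pairwise disjoint subsets S₁, S₂, S₃. -/
def psi {n : ℕ} (S1 S2 S3 : Finset (Fin n)) (a : Fin n → Fin 4) : ℝ :=
  (∏ j ∈ S1, (Real.sin (trigArg ((a j : ℕ) : ℝ)) * Real.cos (trigArg ((a j : ℕ) : ℝ)))) *
  (∏ j ∈ S2, Real.cos (trigArg ((a j : ℕ) : ℝ))) *
  (∏ j ∈ S3, Real.sin (trigArg ((a j : ℕ) : ℝ)))

/-- φ(x; a) for a binary 4-tuple x = x₁x₂x₃x₄. -/
def phi {n : ℕ} (u v : Fin n → Fin 4) (S1 S2 S3 : Finset (Fin n))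
    (x1 x2 x3 x4 : ℕ) (a : Fin n → Fin 4) : ℝ :=
  (2 : ℝ) ^ (((2 * S1.card + S2.card + S3.card + (x1 + x2 + x3 + x4) : ℕ) : ℝ) / 2
      - 2 * (n : ℝ)) *
    Real.sin (trigArg (dotR a u)) ^ x1 * Real.cos (trigArg (dotR a u)) ^ x2 *
    Real.sin (trigArg (dotR a v)) ^ x3 * Real.cos (trigArg (dotR a v)) ^ x4 *
    psi S1 S2 S3 a

/-- V(x) = Σ_{a ∈ {0,1,2,3}ⁿ} φ(x; a). -/
def Vval {n : ℕ} (u v : Fin n → Fin 4) (S1 S2 S3 : Finset (Fin n))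
    (x1 x2 x3 x4 : ℕ) : ℝ :=
  ∑ a : Fin n → Fin 4, phi u v S1 S2 S3 x1 x2 x3 x4 a

/-- S₁, S₂, S₃ are pairwise disjoint. -/
def PairwiseDisj {n : ℕ} (S1 S2 S3 : Finset (Fin n)) : Prop :=
  Disjoint S1 S2 ∧ Disjoint S1 S3 ∧ Disjoint S2 S3

/-- (S₁,S₂,S₃) is a word of type x = x₁x₂x₃x₄. -/
def IsWord {n : ℕ} (u v : Fin n → Fin 4) (S1 S2 S3 : Finset (Fin n))
    (x1 x2 x3 x4 : ℕ) : Prop :=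
  PairwiseDisj S1 S2 S3 ∧ Vval u v S1 S2 S3 x1 x2 x3 x4 ≠ 0

/-- The length m + X of a word. -/
def wordLength {n : ℕ} (S1 S2 S3 : Finset (Fin n)) (x1 x2 x3 x4 : ℕ) : ℕ :=
  2 * S1.card + S2.card + S3.card + (x1 + x2 + x3 + x4)

/-- The set of words of type x = x₁x₂x₃x₄. -/
def wordSet {n : ℕ} (u v : Fin n → Fin 4) (x1 x2 x3 x4 : ℕ) :
    Set (Finset (Fin n) × Finset (Fin n) × Finset (Fin n)) :=
  {t | IsWord u v t.1 t.2.1 t.2.2 x1 x2 x3 x4}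

/-- The set of words of type x = x₁x₂x₃x₄ having length L. -/
def wordSetLen {n : ℕ} (u v : Fin n → Fin 4) (x1 x2 x3 x4 L : ℕ) :
    Set (Finset (Fin n) × Finset (Fin n) × Finset (Fin n)) :=
  {t | IsWord u v t.1 t.2.1 t.2.2 x1 x2 x3 x4 ∧
       wordLength t.1 t.2.1 t.2.2 x1 x2 x3 x4 = L}

/-- f_{ks} = #{j : u_j = k, v_j = s}. -/
def freq {n : ℕ} (u v : Fin n → Fin 4) (k s : Fin 4) : ℕ :=
  (Finset.univ.filter (fun j => u j = k ∧ v j = s)).card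

def lam1 {n : ℕ} (u v : Fin n → Fin 4) : ℕ := freq u v 1 0 + freq u v 3 0
def lam2 {n : ℕ} (u v : Fin n → Fin 4) : ℕ := freq u v 0 1 + freq u v 0 3
def lam3 {n : ℕ} (u v : Fin n → Fin 4) : ℕ := freq u v 1 2 + freq u v 3 2
def lam4 {n : ℕ} (u v : Fin n → Fin 4) : ℕ := freq u v 2 1 + freq u v 2 3
def lam5 {n : ℕ} (u v : Fin n → Fin 4) : ℕ := freq u v 1 1 + freq u v 3 3
def lam6 {n : ℕ} (u v : Fin n → Fin 4) : ℕ := freq u v 1 3 + freq u v 3 1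
def lam7 {n : ℕ} (u v : Fin n → Fin 4) : ℕ := freq u v 0 2
def lam8 {n : ℕ} (u v : Fin n → Fin 4) : ℕ := freq u v 2 0
def lam9 {n : ℕ} (u v : Fin n → Fin 4) : ℕ := freq u v 2 2
def lam10 {n : ℕ} (u v : Fin n → Fin 4) : ℕ := freq u v 0 0

def len1 {n : ℕ} (u v : Fin n → Fin 4) : ℕ :=
  2 * (lam4 u v + lam8 u v + lam9 u v) + lam1 u v + lam3 u v + lam5 u v + lam6 u v
def len2 {n : ℕ} (u v : Fin n → Fin 4) : ℕ :=
  2 * (lam3 u v + lam7 u v + lam9 u v) + lam2 u v + lam4 u v + lam5 u v + lam6 u v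
def len3 {n : ℕ} (u v : Fin n → Fin 4) : ℕ :=
  2 * (lam2 u v + lam8 u v + lam9 u v) + lam1 u v + lam3 u v + lam5 u v + lam6 u v
def len4 {n : ℕ} (u v : Fin n → Fin 4) : ℕ :=
  2 * (lam1 u v + lam7 u v + lam9 u v) + lam2 u v + lam4 u v + lam5 u v + lam6 u v
def len5 {n : ℕ} (u v : Fin n → Fin 4) : ℕ :=
  2 * (lam1 u v + lam3 u v + lam5 u v + lam6 u v)
def len6 {n : ℕ} (u v : Fin n → Fin 4) : ℕ :=
  2 * (lam2 u v + lam4 u v + lam5 u v + lam6 u v)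
def len7 {n : ℕ} (u v : Fin n → Fin 4) : ℕ :=
  2 * (lam1 u v + lam2 u v + lam3 u v + lam4 u v)
def len8 {n : ℕ} (u v : Fin n → Fin 4) : ℕ :=
  2 * (lam7 u v + lam8 u v) + lam1 u v + lam2 u v + lam3 u v + lam4 u v
def len9 {n : ℕ} (u v : Fin n → Fin 4) : ℕ :=
  2 * (lam5 u v + lam7 u v + lam8 u v) + lam1 u v + lam2 u v + lam3 u v + lam4 u v
def len10 {n : ℕ} (u v : Fin n → Fin 4) : ℕ :=
  2 * (lam6 u v + lam7 u v + lam8 u v) + lam1 u v + lam2 u v + lam3 u v + lam4 u v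

/-- ρ₁ = 2^{−⌊(λ₁+λ₃+λ₅+λ₆)/2⌋}. -/
def rho1 {n : ℕ} (u v : Fin n → Fin 4) : ℝ :=
  ((2 : ℝ) ^ ((lam1 u v + lam3 u v + lam5 u v + lam6 u v) / 2))⁻¹
/-- ρ₂ = 2^{−⌊(λ₂+λ₄+λ₅+λ₆)/2⌋}. -/
def rho2 {n : ℕ} (u v : Fin n → Fin 4) : ℝ :=
  ((2 : ℝ) ^ ((lam2 u v + lam4 u v + lam5 u v + lam6 u v) / 2))⁻¹
/-- ξ₁ = 2^{−⌊(λ₁+λ₃)/2⌋}. -/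
def xi1 {n : ℕ} (u v : Fin n → Fin 4) : ℝ :=
  ((2 : ℝ) ^ ((lam1 u v + lam3 u v) / 2))⁻¹
/-- ξ₂ = 2^{−⌊(λ₂+λ₄)/2⌋}. -/
def xi2 {n : ℕ} (u v : Fin n → Fin 4) : ℝ :=
  ((2 : ℝ) ^ ((lam2 u v + lam4 u v) / 2))⁻¹
/-- ξ = 2^{−⌊(λ₁+λ₂+λ₃+λ₄+1)/2⌋}. -/
def xival {n : ℕ} (u v : Fin n → Fin 4) : ℝ :=
  ((2 : ℝ) ^ ((lam1 u v + lam2 u v + lam3 u v + lam4 u v + 1) / 2))⁻¹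

/-!
Write cos and sin of π/4 + kπ/2 as the real parts of ζ·iᵏ and ζ⁷·iᵏ, where ζ = e^{iπ/4}, and
(-1)^{a'u}·i^{a'v} as ∏ⱼ i^{(2uⱼ+vⱼ)aⱼ}. For x = 11x₃x₄ the sum V(x) over a ∈ (ℤ/4)ⁿ then
factorises into one-coordinate character sums over ℤ/4, and such a sum vanishes unless j ∈ S₁
exactly when 2uⱼ+vⱼ ≡ 2 (mod 4) and j ∈ S₂ ∪ S₃ exactly when vⱼ is odd. So the words are the
triples (B, D, C \ D) with D ⊆ C, where C = {j | vⱼ odd} has λ₂+λ₄+λ₅+λ₆ elements, and for them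
V = 2^{(1-#C)/2}·Re ζᵏ with k ≡ #C + 1 (mod 2). If #C is even, |Re ζᵏ| = √2/2 for every D. If #C
is odd, Re ζᵏ is ±1 or 0 according to k mod 4, which is decided by the parity of #D, so exactly
half of the 2^{#C} sets D give words.
-/

theorem Finset.card_powerset_filter_even_add {α : Type*} {s : Finset α} (hs : s.Nonempty)
    (c : ℕ) : #(s.powerset.filter fun t => Even (#t + c)) = 2 ^ (#s - 1) := by
  have hsplit := sum_filter_add_sum_filter_not s.powerset (fun t => Even (#t + c))
    (fun t => (-1 : ℤ) ^ (#t + c))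
  rw [sum_congr rfl fun t ht => (mem_filter.1 ht).2.neg_one_pow,
    sum_congr rfl fun t ht => (Nat.not_even_iff_odd.1 (mem_filter.1 ht).2).neg_one_pow] at hsplit
  simp only [pow_add, ← sum_mul, sum_powerset_neg_one_pow_card_of_nonempty hs, zero_mul,
    sum_const, nsmul_eq_mul, mul_one, mul_neg] at hsplit
  have htotal := card_filter_add_card_filter_not (s := s.powerset) fun t => Even (#t + c)
  rw [card_powerset, ← Nat.sub_one_add_one_eq_of_pos hs.card_pos, pow_succ] at htotal
  omega

namespace AliasingWords

open Complex in
def zeta8 : ℂ := exp (↑(π / 4) * I)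

local notation "ζ" => zeta8

lemma zeta8_eq : ζ = ↑(√2 / 2) + ↑(√2 / 2) * Complex.I := by
  rw [zeta8, Complex.exp_mul_I, ← Complex.ofReal_cos, ← Complex.ofReal_sin,
    Real.cos_pi_div_four, Real.sin_pi_div_four]

lemma zeta8_ne_zero : ζ ≠ 0 := Complex.exp_ne_zero _

lemma zeta8_sq : ζ ^ 2 = Complex.I := by
  rw [zeta8, ← Complex.exp_nat_mul]
  convert Complex.exp_pi_div_two_mul_I using 2
  push_cast; ring

lemma zeta8_pow_seven : ζ ^ 7 = ↑(√2 / 2) - ↑(√2 / 2) * Complex.I := by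
  rw [show ζ ^ 7 = (ζ ^ 2) ^ 3 * ζ by ring, zeta8_sq, Complex.I_pow_three, zeta8_eq]
  ring_nf; rw [Complex.I_sq]; ring

lemma zeta8_mul_I_pow (N : ℕ) : ζ * Complex.I ^ N = Complex.exp (↑(trigArg N) * Complex.I) := by
  have hI : Complex.I ^ N = Complex.exp (N * (π / 2 * Complex.I)) := by
    rw [Complex.exp_nat_mul, Complex.exp_pi_div_two_mul_I]
  rw [hI, zeta8, ← Complex.exp_add, trigArg]
  push_cast; ring_nf

lemma cos_trigArg_natCast (N : ℕ) : Real.cos (trigArg N) = (ζ * Complex.I ^ N).re := by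
  rw [zeta8_mul_I_pow, Complex.exp_ofReal_mul_I_re]

lemma sin_trigArg_natCast (N : ℕ) : Real.sin (trigArg N) = (ζ ^ 7 * Complex.I ^ N).re := by
  rw [show ζ ^ 7 * Complex.I ^ N = (ζ ^ 2) ^ 3 * (ζ * Complex.I ^ N) by ring, zeta8_sq,
    zeta8_mul_I_pow, Complex.I_pow_three]
  simp [Complex.exp_ofReal_mul_I_im]

lemma sin_mul_cos_trigArg_natCast (N : ℕ) :
    Real.sin (trigArg N) * Real.cos (trigArg N) = (-1) ^ N / 2 := by
  have h := Real.sin_two_mul (trigArg N)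
  rw [show 2 * trigArg N = N * π + π / 2 by rw [trigArg]; ring, Real.sin_add_pi_div_two,
    Real.cos_nat_mul_pi] at h
  linarith

lemma zeta8_pow_two_mul (m : ℕ) : ζ ^ (2 * m) = Complex.I ^ m := by
  rw [pow_mul, zeta8_sq]

lemma re_I_pow_of_odd {m : ℕ} (hm : Odd m) : (Complex.I ^ m).re = 0 := by
  obtain ⟨l, rfl⟩ := hm
  rw [pow_succ, pow_mul, Complex.I_sq, ← Complex.ofReal_one, ← Complex.ofReal_neg,
    ← Complex.ofReal_pow, Complex.re_ofReal_mul, Complex.I_re, mul_zero]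

lemma abs_re_I_pow_of_even {m : ℕ} (hm : Even m) : |(Complex.I ^ m).re| = 1 := by
  obtain ⟨l, rfl⟩ := hm
  rw [← two_mul, pow_mul, Complex.I_sq, ← Complex.ofReal_one, ← Complex.ofReal_neg,
    ← Complex.ofReal_pow, Complex.ofReal_re, abs_pow, abs_neg, abs_one, one_pow]

lemma abs_re_zeta8_pow_of_odd {k : ℕ} (hk : Odd k) : |(ζ ^ k).re| = √2 / 2 := by
  obtain ⟨m, rfl⟩ := hk
  have h : (0 : ℝ) < √2 / 2 := by positivity
  rw [pow_succ, zeta8_pow_two_mul, Complex.I_pow_eq_pow_mod, zeta8_eq]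
  have : m % 4 < 4 := Nat.mod_lt _ (by norm_num)
  interval_cases m % 4 <;> simp [pow_succ, abs_of_pos h]

lemma re_zeta8_pow_ne_zero_iff {k : ℕ} (hk : Even k) : (ζ ^ k).re ≠ 0 ↔ 4 ∣ k := by
  obtain ⟨m, rfl⟩ := hk
  rw [← two_mul, zeta8_pow_two_mul]
  rcases Nat.even_or_odd m with hm | hm
  · have habs := abs_re_I_pow_of_even hm
    obtain ⟨l, rfl⟩ := hm
    exact iff_of_true (fun h => by simp [h] at habs) ⟨l, by ring⟩
  · have hre := re_I_pow_of_odd hm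
    obtain ⟨l, rfl⟩ := hm
    exact iff_of_false (not_not.2 hre) (by omega)

lemma abs_re_zeta8_pow_of_four_dvd {k : ℕ} (hk : 4 ∣ k) : |(ζ ^ k).re| = 1 := by
  obtain ⟨m, rfl⟩ := hk
  rw [show 4 * m = 2 * (2 * m) by ring, zeta8_pow_two_mul]
  exact abs_re_I_pow_of_even (even_two_mul m)

lemma two_rpow_one_sub_div_two_of_odd {c : ℕ} (hc : Odd c) :
    (2 : ℝ) ^ ((1 - c : ℝ) / 2) = (2 ^ (c / 2))⁻¹ := by
  obtain ⟨m, rfl⟩ := hc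
  rw [show (2 * m + 1) / 2 = m by omega, ← Real.rpow_natCast, ← Real.rpow_neg zero_le_two]
  congr 1
  push_cast
  ring

lemma two_rpow_one_sub_div_two_mul_of_even {c : ℕ} (hc : Even c) :
    (2 : ℝ) ^ ((1 - c : ℝ) / 2) * (√2 / 2) = (2 ^ (c / 2))⁻¹ := by
  obtain ⟨m, rfl⟩ := hc
  rw [show (m + m) / 2 = m by omega, ← Real.rpow_natCast, ← Real.rpow_neg zero_le_two,
    Real.sqrt_eq_rpow, ← Real.rpow_sub_one two_ne_zero, ← Real.rpow_add two_pos]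
  congr 1
  push_cast
  ring

def psiFactor : Fin 4 → Fin 4 → ℝ
  | 0, _ => 1
  | 1, b => Real.sin (trigArg ((b : ℕ) : ℝ)) * Real.cos (trigArg ((b : ℕ) : ℝ))
  | 2, b => Real.cos (trigArg ((b : ℕ) : ℝ))
  | 3, b => Real.sin (trigArg ((b : ℕ) : ℝ))

def localSum (r s : Fin 4) : ℂ := ∑ b : Fin 4, Complex.I ^ ((r : ℕ) * b) * psiFactor s b

lemma localSum_eq (r s : Fin 4) : localSum r s =
    !![4, 0, 0, 0; 0, 0, 2 * ζ ^ 7, 2 * ζ; 0, 2, 0, 0; 0, 0, 2 * ζ, 2 * ζ ^ 7] r s := by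
  fin_cases r <;> fin_cases s <;>
    simp only [localSum, Fin.sum_univ_four, psiFactor, cos_trigArg_natCast, sin_trigArg_natCast,
      zeta8_pow_seven] <;>
    simp [zeta8_eq, Complex.ext_iff, pow_succ] <;> ring_nf <;> norm_num

lemma localSum_ne_zero_iff (r s : Fin 4) :
    localSum r s ≠ 0 ↔ (s = 0 ↔ r = 0) ∧ (s = 1 ↔ r = 2) := by
  fin_cases r <;> fin_cases s <;> simp [localSum_eq, zeta8_ne_zero]

variable {n : ℕ}

def label (S1 S2 S3 : Finset (Fin n)) (j : Fin n) : Fin 4 :=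
  if j ∈ S1 then 1 else if j ∈ S2 then 2 else if j ∈ S3 then 3 else 0

lemma psi_eq_prod_psiFactor {S1 S2 S3 : Finset (Fin n)} (h : PairwiseDisj S1 S2 S3)
    (a : Fin n → Fin 4) : psi S1 S2 S3 a = ∏ j, psiFactor (label S1 S2 S3 j) (a j) := by
  obtain ⟨h12, h13, h23⟩ := h
  have key : ∀ j, psiFactor (label S1 S2 S3 j) (a j) =
      (if j ∈ S1 then psiFactor 1 (a j) else 1) * (if j ∈ S2 then psiFactor 2 (a j) else 1) *
        (if j ∈ S3 then psiFactor 3 (a j) else 1) := by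
    intro j
    by_cases h1 : j ∈ S1
    · simp [label, h1, disjoint_left.mp h12 h1, disjoint_left.mp h13 h1]
    by_cases h2 : j ∈ S2
    · simp [label, h1, h2, disjoint_left.mp h23 h2]
    by_cases h3 : j ∈ S3 <;> simp [label, h1, h2, h3, psiFactor]
  rw [prod_congr rfl fun j _ => key j]
  simp only [prod_mul_distrib, prod_ite_mem, univ_inter]
  rfl

def charIndex (u v : Fin n → Fin 4) (j : Fin n) : Fin 4 := 2 * u j + v j

lemma I_pow_two_mul_add_mul (p q b : Fin 4) :
    Complex.I ^ (((2 * p + q : Fin 4) : ℕ) * b) =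
      (-1) ^ ((b : ℕ) * p) * Complex.I ^ ((b : ℕ) * q) := by
  rw [← Complex.I_sq, ← pow_mul, ← pow_add, Complex.I_pow_eq_pow_mod,
    Complex.I_pow_eq_pow_mod (_ + _)]
  congr 1
  revert p q b
  decide

lemma dotR_eq_natCast (a w : Fin n → Fin 4) :
    dotR a w = ((∑ j, (a j : ℕ) * (w j : ℕ) : ℕ) : ℝ) := by
  simp [dotR]

variable (u v : Fin n → Fin 4)

def trivialCoords : Finset (Fin n) := univ.filter (charIndex u v · = 0)

def signCoords : Finset (Fin n) := univ.filter (charIndex u v · = 2)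

def oddCoords : Finset (Fin n) :=
  univ.filter fun j => charIndex u v j = 1 ∨ charIndex u v j = 3

-- The coordinates whose local factor for `S₂ = D` is `2ζ⁷` rather than `2ζ`.
def conjCoords (D : Finset (Fin n)) : Finset (Fin n) :=
  (oddCoords u v).filter fun j => j ∈ D ↔ charIndex u v j = 1

lemma card_filter_charIndex (P : Fin 4 → Prop) [DecidablePred P] :
    #(univ.filter fun j => P (charIndex u v j)) =
      ∑ pq ∈ univ.filter (fun pq : Fin 4 × Fin 4 => P (2 * pq.1 + pq.2)),
        freq u v pq.1 pq.2 := by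
  rw [card_eq_sum_card_fiberwise (f := fun j => (u j, v j))
    (s := univ.filter fun j => P (charIndex u v j))
    (t := univ.filter fun pq : Fin 4 × Fin 4 => P (2 * pq.1 + pq.2))
    fun j hj => mem_coe.2 (mem_filter.2 ⟨mem_univ _, (mem_filter.1 (mem_coe.1 hj)).2⟩)]
  refine sum_congr rfl fun ⟨p, q⟩ hpq => ?_
  rw [freq, filter_filter]
  congr 1
  ext j
  simp only [mem_filter, mem_univ, true_and, Prod.mk.injEq] at hpq ⊢
  refine ⟨And.right, fun h => ⟨?_, h⟩⟩
  rwa [charIndex, h.1, h.2]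

lemma card_signCoords : #(signCoords u v) = lam1 u v + lam7 u v + lam9 u v := by
  rw [signCoords, card_filter_charIndex u v (· = 2),
    show univ.filter (fun pq : Fin 4 × Fin 4 => 2 * pq.1 + pq.2 = 2) =
      {(1, 0), (3, 0), (0, 2), (2, 2)} by decide]
  simp [lam1, lam7, lam9]
  ring

lemma card_oddCoords : #(oddCoords u v) = lam2 u v + lam4 u v + lam5 u v + lam6 u v := by
  rw [oddCoords, card_filter_charIndex u v (fun r => r = 1 ∨ r = 3),
    show univ.filter (fun pq : Fin 4 × Fin 4 => 2 * pq.1 + pq.2 = 1 ∨ 2 * pq.1 + pq.2 = 3) =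
      {(0, 1), (0, 3), (2, 1), (2, 3), (1, 1), (3, 3), (1, 3), (3, 1)} by decide]
  simp [lam2, lam4, lam5, lam6]
  ring

lemma card_trivialCoords_add_card_signCoords_add_card_oddCoords :
    #(trivialCoords u v) + #(signCoords u v) + #(oddCoords u v) = n := by
  have key : ∀ r : Fin 4, (if r = 0 then 1 else 0) + (if r = 2 then 1 else 0) +
      (if r = 1 ∨ r = 3 then 1 else 0) = 1 := by
    decide
  simp only [trivialCoords, signCoords, oddCoords, card_filter, ← sum_add_distrib, key,
    sum_const, card_univ, Fintype.card_fin, smul_eq_mul, mul_one]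

variable {u v} {S1 S2 S3 : Finset (Fin n)}

lemma eq_signCoords_of_localSum_ne_zero (hd : PairwiseDisj S1 S2 S3)
    (h : ∀ j, localSum (charIndex u v j) (label S1 S2 S3 j) ≠ 0) :
    S1 = signCoords u v ∧ S2 ⊆ oddCoords u v ∧ S3 = oddCoords u v \ S2 := by
  obtain ⟨h12, h13, h23⟩ := hd
  have key : ∀ j, (j ∈ S1 ↔ charIndex u v j = 2) ∧
      (j ∈ S2 → charIndex u v j = 1 ∨ charIndex u v j = 3) ∧
      (j ∈ S3 ↔ (charIndex u v j = 1 ∨ charIndex u v j = 3) ∧ j ∉ S2) := by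
    intro j
    have hj := (localSum_ne_zero_iff _ _).mp (h j)
    generalize charIndex u v j = r at hj ⊢
    by_cases h1 : j ∈ S1
    · simp [label, h1, disjoint_left.mp h12 h1, disjoint_left.mp h13 h1] at hj ⊢
      omega
    by_cases h2 : j ∈ S2
    · simp [label, h1, h2, disjoint_left.mp h23 h2] at hj ⊢
      omega
    by_cases h3 : j ∈ S3 <;> simp [label, h1, h2, h3] at hj ⊢ <;> omega
  refine ⟨?_, fun j hj => ?_, ?_⟩
  · ext j; simp [signCoords, (key j).1]
  · simpa [oddCoords] using (key j).2.1 hj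
  · ext j; simp [oddCoords, (key j).2.2]

lemma pairwiseDisj_signCoords_sdiff {D : Finset (Fin n)} (hD : D ⊆ oddCoords u v) :
    PairwiseDisj (signCoords u v) D (oddCoords u v \ D) := by
  have hBC : Disjoint (signCoords u v) (oddCoords u v) := by
    rw [disjoint_left]
    intro j hB hC
    simp only [signCoords, oddCoords, mem_filter, mem_univ, true_and] at hB hC
    omega
  exact ⟨hBC.mono_right hD, hBC.mono_right sdiff_subset, disjoint_sdiff⟩

lemma localSum_label_signCoords {D : Finset (Fin n)} (hD : D ⊆ oddCoords u v) (j : Fin n) :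
    localSum (charIndex u v j) (label (signCoords u v) D (oddCoords u v \ D) j) =
      2 ^ (1 + if j ∈ trivialCoords u v then 1 else 0) *
        ζ ^ ((if j ∈ oddCoords u v then 1 else 0) +
          6 * if j ∈ conjCoords u v D then 1 else 0) := by
  have hDj : j ∈ D → charIndex u v j = 1 ∨ charIndex u v j = 3 := fun h => by
    simpa [oddCoords] using hD h
  by_cases hj : j ∈ D
  · have := hDj hj
    simp only [label, trivialCoords, signCoords, oddCoords, conjCoords, mem_filter, mem_univ,
      true_and, mem_sdiff, hj] at this ⊢
    generalize charIndex u v j = r at this ⊢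
    fin_cases r <;> simp_all [localSum_eq]
  · simp only [label, trivialCoords, signCoords, oddCoords, conjCoords, mem_filter, mem_univ,
      true_and, mem_sdiff, hj]
    generalize charIndex u v j = r
    fin_cases r <;> simp [localSum_eq]
    norm_num

lemma prod_localSum_label_signCoords {D : Finset (Fin n)} (hD : D ⊆ oddCoords u v) :
    ∏ j, localSum (charIndex u v j) (label (signCoords u v) D (oddCoords u v \ D) j) =
      2 ^ (n + #(trivialCoords u v)) * ζ ^ (#(oddCoords u v) + 6 * #(conjCoords u v D)) := by
  simp only [localSum_label_signCoords hD, prod_mul_distrib, prod_pow_eq_pow_sum, sum_add_distrib,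
    ← mul_sum, sum_boole, filter_mem_eq_inter, univ_inter, sum_const, card_univ,
    Fintype.card_fin, smul_eq_mul, mul_one, Nat.cast_id]

lemma card_conjCoords_add_card {D : Finset (Fin n)} (hD : D ⊆ oddCoords u v) :
    #(conjCoords u v D) + #D =
      2 * #(D.filter (charIndex u v · = 1)) +
        #((oddCoords u v).filter (charIndex u v · = 3)) := by
  have hD1 : D.filter (charIndex u v · = 1) =
      (oddCoords u v).filter fun j => j ∈ D ∧ charIndex u v j = 1 := by
    ext j; simpa using fun hj _ => hD hj
  rw [hD1, ← inter_eq_right.mpr hD, ← filter_mem_eq_inter]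
  simp only [conjCoords, card_filter, mul_sum, ← sum_add_distrib]
  refine sum_congr rfl fun j hj => ?_
  simp only [oddCoords, mem_filter, mem_univ, true_and] at hj
  split_ifs <;> simp_all

section Words

-- The `v`-factor of `φ`: `w = 1` for x = 1101 and `w = 7` for x = 1110.
variable {x3 x4 w : ℕ} (hv : ∀ N : ℕ,
  Real.sin (trigArg N) ^ x3 * Real.cos (trigArg N) ^ x4 = (ζ ^ w * Complex.I ^ N).re)
include hv

lemma phi_eq_re (hd : PairwiseDisj S1 S2 S3) (a : Fin n → Fin 4) :
    phi u v S1 S2 S3 1 1 x3 x4 a =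
      2 ^ ((wordLength S1 S2 S3 1 1 x3 x4 : ℝ) / 2 - 2 * n) / 2 *
        (ζ ^ w * ∏ j, Complex.I ^ ((charIndex u v j : ℕ) * a j) *
          psiFactor (label S1 S2 S3 j) (a j)).re := by
  set Nu := ∑ j, (a j : ℕ) * (u j : ℕ)
  set Nv := ∑ j, (a j : ℕ) * (v j : ℕ)
  have hprod : ∏ j, Complex.I ^ ((charIndex u v j : ℕ) * a j) *
      (psiFactor (label S1 S2 S3 j) (a j) : ℂ) =
        ↑((-1) ^ Nu * psi S1 S2 S3 a) * Complex.I ^ Nv := by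
    simp only [prod_mul_distrib, charIndex, I_pow_two_mul_add_mul, prod_pow_eq_pow_sum,
      psi_eq_prod_psiFactor hd, Nu, Nv]
    push_cast
    ring
  have hsc := sin_mul_cos_trigArg_natCast Nu
  rw [hprod, mul_left_comm, Complex.re_ofReal_mul, ← hv, phi, dotR_eq_natCast, dotR_eq_natCast,
    wordLength, pow_one, pow_one, mul_assoc (2 ^ _), hsc]
  ring

lemma Vval_eq_re_prod_localSum (hd : PairwiseDisj S1 S2 S3) :
    Vval u v S1 S2 S3 1 1 x3 x4 =
      2 ^ ((wordLength S1 S2 S3 1 1 x3 x4 : ℝ) / 2 - 2 * n) / 2 *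
        (ζ ^ w * ∏ j, localSum (charIndex u v j) (label S1 S2 S3 j)).re := by
  simp only [Vval, phi_eq_re hv hd, ← mul_sum, ← Complex.re_sum]
  simp only [localSum, prod_univ_sum, Fintype.piFinset_univ]

variable (hx : x3 + x4 = 1)
include hx

lemma Vval_signCoords_sdiff {D : Finset (Fin n)} (hD : D ⊆ oddCoords u v) :
    Vval u v (signCoords u v) D (oddCoords u v \ D) 1 1 x3 x4 =
      2 ^ ((1 - #(oddCoords u v) : ℝ) / 2) *
        (ζ ^ (w + #(oddCoords u v) + 6 * #(conjCoords u v D))).re := by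
  rw [Vval_eq_re_prod_localSum hv (pairwiseDisj_signCoords_sdiff hD),
    prod_localSum_label_signCoords hD,
    mul_left_comm, ← pow_add, ← add_assoc, ← Complex.ofReal_ofNat, ← Complex.ofReal_pow,
    Complex.re_ofReal_mul, ← mul_assoc]
  congr 1
  have hcard := card_trivialCoords_add_card_signCoords_add_card_oddCoords u v
  have hD' := card_sdiff_add_card_eq_card hD
  rw [← Real.rpow_natCast, div_eq_mul_inv, ← Real.rpow_neg_one, ← Real.rpow_add two_pos,
    ← Real.rpow_add two_pos, wordLength]
  congr 1
  push_cast
  rw [← Nat.cast_inj (R := ℝ)] at hcard hD' hx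
  push_cast at hcard hD' hx
  linarith

lemma isWord_iff :
    IsWord u v S1 S2 S3 1 1 x3 x4 ↔ S1 = signCoords u v ∧ S2 ⊆ oddCoords u v ∧
      S3 = oddCoords u v \ S2 ∧
        (ζ ^ (w + #(oddCoords u v) + 6 * #(conjCoords u v S2))).re ≠ 0 := by
  constructor
  · rintro ⟨hd, hV⟩
    have hne : ∀ j, localSum (charIndex u v j) (label S1 S2 S3 j) ≠ 0 := by
      intro j hj
      rw [Vval_eq_re_prod_localSum hv hd, prod_eq_zero (mem_univ j) hj] at hV
      simp at hV
    obtain ⟨rfl, hS2, rfl⟩ := eq_signCoords_of_localSum_ne_zero hd hne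
    rw [Vval_signCoords_sdiff hv hx hS2] at hV
    exact ⟨rfl, hS2, rfl, right_ne_zero_of_mul hV⟩
  · rintro ⟨rfl, hS2, rfl, hre⟩
    refine ⟨pairwiseDisj_signCoords_sdiff hS2, ?_⟩
    rw [Vval_signCoords_sdiff hv hx hS2]
    exact mul_ne_zero (Real.rpow_pos_of_pos two_pos _).ne' hre

lemma ncard_wordSet (hw : Odd w) :
    (wordSet u v 1 1 x3 x4).ncard = 2 ^ (2 * (#(oddCoords u v) / 2)) := by
  set C := oddCoords u v with hCdef
  have hset : wordSet u v 1 1 x3 x4 = ↑((C.powerset.filter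
      fun D => (ζ ^ (w + #C + 6 * #(conjCoords u v D))).re ≠ 0).image
        fun D => (signCoords u v, D, C \ D)) := by
    ext ⟨S1, S2, S3⟩
    simp only [wordSet, Set.mem_ofPred_eq, isWord_iff hv hx, coe_image, coe_filter,
      mem_powerset, Set.mem_image, Prod.mk.injEq]
    constructor
    · rintro ⟨rfl, hS2, rfl, hre⟩
      exact ⟨S2, ⟨hS2, hre⟩, rfl, rfl, rfl⟩
    · rintro ⟨D, ⟨hD, hre⟩, rfl, rfl, rfl⟩
      exact ⟨rfl, hD, rfl, hre⟩
  rw [hset, Set.ncard_coe_finset,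
    card_image_of_injective _ fun D₁ D₂ h => (Prod.mk.inj (Prod.mk.inj h).2).1]
  have hw2 := Nat.odd_iff.1 hw
  rcases Nat.even_or_odd #C with hC | hC
  · have hC2 := Nat.even_iff.1 hC
    rw [filter_true_of_mem fun D _ => ?_, card_powerset, Nat.two_mul_div_two_of_even hC]
    refine ne_of_apply_ne abs ?_
    rw [abs_re_zeta8_pow_of_odd (Nat.odd_iff.2 (by omega)), abs_zero]
    positivity
  · have hC2 := Nat.odd_iff.1 hC
    have hcond : ∀ D ∈ C.powerset, (ζ ^ (w + #C + 6 * #(conjCoords u v D))).re ≠ 0 ↔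
        Even (#D + ((w + #C) / 2 + #(C.filter (charIndex u v · = 3)))) := by
      intro D hD
      have := card_conjCoords_add_card (mem_powerset.1 hD)
      rw [← hCdef] at this
      rw [re_zeta8_pow_ne_zero_iff (Nat.even_iff.2 (by omega)), Nat.even_iff]
      omega
    rw [filter_congr hcond, card_powerset_filter_even_add (card_pos.1 hC.pos)]
    congr 1
    omega

lemma abs_Vval_of_isWord (hw : Odd w) (h : IsWord u v S1 S2 S3 1 1 x3 x4) :
    |Vval u v S1 S2 S3 1 1 x3 x4| = (2 ^ (#(oddCoords u v) / 2))⁻¹ := by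
  obtain ⟨rfl, hS2, rfl, hre⟩ := (isWord_iff hv hx).1 h
  rw [Vval_signCoords_sdiff hv hx hS2, abs_mul, abs_of_pos (Real.rpow_pos_of_pos two_pos _)]
  have hw2 := Nat.odd_iff.1 hw
  rcases Nat.even_or_odd #(oddCoords u v) with hC | hC
  · have hC2 := Nat.even_iff.1 hC
    rw [abs_re_zeta8_pow_of_odd (Nat.odd_iff.2 (by omega))]
    exact two_rpow_one_sub_div_two_mul_of_even hC
  · have hC2 := Nat.odd_iff.1 hC
    have hk := (re_zeta8_pow_ne_zero_iff (Nat.even_iff.2 (by omega))).1 hre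
    rw [abs_re_zeta8_pow_of_four_dvd hk, mul_one]
    exact two_rpow_one_sub_div_two_of_odd hC

lemma wordLength_of_isWord (h : IsWord u v S1 S2 S3 1 1 x3 x4) :
    wordLength S1 S2 S3 1 1 x3 x4 = 2 * #(signCoords u v) + #(oddCoords u v) + 3 := by
  obtain ⟨rfl, hS2, rfl, -⟩ := (isWord_iff hv hx).1 h
  have := card_sdiff_add_card_eq_card hS2
  rw [wordLength]
  omega

end Words

end AliasingWords

open AliasingWords

theorem theorem1_e_general (n : ℕ) (u v : Fin n → Fin 4)
    (x1 x2 x3 x4 : ℕ)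
    (hx : (x1, x2, x3, x4) = (1, 1, 0, 1) ∨ (x1, x2, x3, x4) = (1, 1, 1, 0)) :
    ((wordSet u v x1 x2 x3 x4).ncard : ℝ) = ((rho2 u v)⁻¹) ^ 2 ∧
    ∀ S1 S2 S3 : Finset (Fin n), IsWord u v S1 S2 S3 x1 x2 x3 x4 →
      |Vval u v S1 S2 S3 x1 x2 x3 x4| = rho2 u v ∧
      wordLength S1 S2 S3 x1 x2 x3 x4 = len4 u v + 3 := by
  obtain ⟨rfl, rfl, w, hx34, hw, hv⟩ : x1 = 1 ∧ x2 = 1 ∧ ∃ w, x3 + x4 = 1 ∧ Odd w ∧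
      ∀ N : ℕ, Real.sin (trigArg N) ^ x3 * Real.cos (trigArg N) ^ x4 =
        (zeta8 ^ w * Complex.I ^ N).re := by
    rcases hx with h | h <;> simp only [Prod.mk.injEq] at h <;> obtain ⟨rfl, rfl, rfl, rfl⟩ := h
    · exact ⟨rfl, rfl, 1, rfl, odd_one, fun N => by simp [cos_trigArg_natCast]⟩
    · exact ⟨rfl, rfl, 7, rfl, by decide, fun N => by simp [sin_trigArg_natCast]⟩
  have hrho : rho2 u v = (2 ^ (#(oddCoords u v) / 2))⁻¹ := by rw [rho2, card_oddCoords]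
  refine ⟨?_, fun S1 S2 S3 h => ⟨?_, ?_⟩⟩
  · rw [ncard_wordSet hv hx34 hw, hrho, inv_inv, pow_mul']
    push_cast
    rfl
  · rw [abs_Vval_of_isWord hv hx34 hw h, hrho]
  · rw [wordLength_of_isWord hv hx34 h, len4, card_signCoords, card_oddCoords]
    ring

/-- Theorem 1(e): for x = 1101 and x = 1110 there are ρ₂⁻² words of type x; every
such word has aliasing index ρ₂ and length l₄ + 3. -/
theorem theorem1_e (n : ℕ) (hn : 1 ≤ n) (u v : Fin n → Fin 4)
    (x1 x2 x3 x4 : ℕ)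
    (hx : (x1, x2, x3, x4) = (1, 1, 0, 1) ∨ (x1, x2, x3, x4) = (1, 1, 1, 0)) :
    ((wordSet u v x1 x2 x3 x4).ncard : ℝ) = ((rho2 u v)⁻¹) ^ 2 ∧
    ∀ S1 S2 S3 : Finset (Fin n), IsWord u v S1 S2 S3 x1 x2 x3 x4 →
      |Vval u v S1 S2 S3 x1 x2 x3 x4| = rho2 u v ∧
      wordLength S1 S2 S3 x1 x2 x3 x4 = len4 u v + 3 :=
  theorem1_e_general n u v x1 x2 x3 x4 hx
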